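/- arXiv:1208.3955 — 2 statements merged into one kernel-verified Lean document; each statement's English description precedes it below -/
import Mathlib

section
/- Let h ≥ 3, d ≥ 3. Every lattice point of Q = 2P_{h,d} ∩ {x : x_1 = 1} is either of the form a_0 + a_1 with a_0 a lattice point of P_0 = P_{h,d} ∩ {x_1 = 0} and a_1 a lattice point of P_1 = P_{h,d} ∩ {x_1 = 1}, or equals u_j' = e_1 + j(e_2+⋯+e_{d-1}) + (j+2)e_d for some j ∈ {1,…,h}. -/
open Finset Pointwise

noncomputable section

/-- Cast an integer lattice point to a real point. -/
def castPt {d : ℕ} (a : Fin d → ℤ) : Fin d → ℝ := fun i => (a i : ℝ)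

/-- The cone of nonnegative real combinations of a set of vectors. -/
def coneOf {d : ℕ} (A : Set (Fin d → ℝ)) : Set (Fin d → ℝ) :=
  {x | ∃ (n : ℕ) (c : Fin n → ℝ) (v : Fin n → (Fin d → ℝ)),
    (∀ i, 0 ≤ c i) ∧ (∀ i, v i ∈ A) ∧ x = ∑ i, c i • v i}

/-- `A_P = {(α,1) : α ∈ P ∩ ℤ^d} ⊂ ℤ^(d+1)`. -/
def APts {d : ℕ} (P : Set (Fin d → ℝ)) : Set (Fin (d+1) → ℤ) :=
  {b | b (Fin.last d) = 1 ∧ castPt (fun i : Fin d => b i.castSucc) ∈ P}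

/-- The `k`-th standard unit vector (0-indexed coordinate `k`). -/
def eV (d : ℕ) (k : ℕ) : Fin d → ℤ := fun i => if i.val = k then 1 else 0

/-- `e_2 + ⋯ + e_{d-1}` (coordinates with 0 < index < d-1). -/
def eMid (d : ℕ) : Fin d → ℤ := fun i => if 0 < i.val ∧ i.val < d - 1 then 1 else 0

/-- `e_d`, the last unit vector. -/
def eD (d : ℕ) : Fin d → ℤ := eV d (d - 1)

/-- `e_1`, the first unit vector. -/
def eOne (d : ℕ) : Fin d → ℤ := eV d 0

/-- The vertex set of the polytope `P_{h,d}`. -/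
def PhdVerts (h d : ℕ) : Set (Fin d → ℤ) :=
  ({0, eD d, eMid d, (h : ℤ) • (eMid d + eD d), ((h : ℤ) - 1) • eMid d + (h : ℤ) • eD d,
    (h : ℤ) • eMid d + ((h : ℤ) - 1) • eD d, eOne d + (4 : ℤ) • eD d, eOne d + (5 : ℤ) • eD d,
    eOne d + eMid d, eOne d + eMid d + eD d} : Set (Fin d → ℤ))
  ∪ {x | ∃ i : Fin d, 0 < i.val ∧ i.val < d - 1 ∧ (x = eV d i.val ∨ x = eV d i.val + eD d)}

/-- The polytope `P_{h,d} ⊂ ℝ^d`. -/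
def Phd (h d : ℕ) : Set (Fin d → ℝ) := convexHull ℝ (castPt '' PhdVerts h d)

/-- Append a last coordinate to a lattice point. -/
def app {d : ℕ} (a : Fin d → ℤ) (k : ℤ) : Fin (d+1) → ℤ := Fin.snoc a k

/-- `u_j' = e_1 + j(e_2+⋯+e_{d-1}) + (j+2)e_d`. -/
def ujp (d : ℕ) (j : ℤ) : Fin d → ℤ := eOne d + j • eMid d + (j + 2) • eD d

/-- `u_{1,j} = j(e_2+⋯+e_{d-1}+e_d)`. -/
def u1j (d : ℕ) (j : ℤ) : Fin d → ℤ := j • (eMid d + eD d)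

/-
Write `a = 2y` with `y ∈ P_{h,d}`. The vertices of `P_{h,d}` lie in the two hyperplanes
`x_1 = 0` and `x_1 = 1`, so `y` lies on a segment from `p ∈ P_0` to `q ∈ P_1`, and `a_1 = 1` makes
`y` its midpoint: `a = p + q`. A handful of valid inequalities of `P_0` and `P_1` then control the
lattice point `a`. Its middle coordinates `a_2, …, a_{d-1}` differ by at most one.
If they all equal some `c`, then `(c, a_d)` satisfies four linear bounds; unless `a_d = c + 2`
(the points `u_j'`), subtracting a suitable vertex of `P_1` leaves a lattice point
`j (e_2 + ⋯ + e_{d-1}) + w e_d` of the hexagon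
`conv {0, e_d, e_2+⋯+e_{d-1}, u_4, u_5, u_6} ⊂ P_0`.
Otherwise a single middle coordinate `a_k` exceeds the others, which are all `0` or all `1`,
and `a` is `e_k` or `e_k + e_d` plus a vertex of `P_1`.
-/

section ConvexHull

variable {E : Type*} [AddCommGroup E] [Module ℝ E]

theorem LinearMap.eq_of_mem_convexHull (f : E →ₗ[ℝ] ℝ) {S : Set E} {r : ℝ}
    (hS : ∀ v ∈ S, f v = r) {x : E} (hx : x ∈ convexHull ℝ S) : f x = r :=
  convexHull_min hS (convex_hyperplane f.isLinear r) hx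

theorem exists_add_of_mem_two_smul_convexHull_union (f : E →ₗ[ℝ] ℝ) {S T : Set E}
    (hS : S.Nonempty) (hT : T.Nonempty) (hS0 : ∀ v ∈ S, f v = 0) (hT1 : ∀ v ∈ T, f v = 1)
    {x : E} (hx : x ∈ (2 : ℝ) • convexHull ℝ (S ∪ T)) (hfx : f x = 1) :
    ∃ p ∈ convexHull ℝ S, ∃ q ∈ convexHull ℝ T, x = p + q := by
  obtain ⟨y, hy, rfl⟩ := hx
  rw [convexHull_union hS hT, mem_convexJoin] at hy
  obtain ⟨p, hp, q, hq, u, v, -, -, huv, rfl⟩ := hy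
  have hv : v = 1 / 2 := by
    simp only [map_smul, map_add, f.eq_of_mem_convexHull hS0 hp,
      f.eq_of_mem_convexHull hT1 hq, smul_eq_mul] at hfx
    linarith
  obtain rfl : u = 1 / 2 := by linarith
  subst hv
  exact ⟨p, hp, q, hq, by module⟩

theorem smul_add_one_sub_smul_mem_convexHull {s : Set E} {A B : E} (hA : A ∈ s) (hB : B ∈ s)
    {θ : ℝ} (hθ₀ : 0 ≤ θ) (hθ₁ : θ ≤ 1) : θ • A + (1 - θ) • B ∈ convexHull ℝ s :=
  convex_convexHull ℝ s (subset_convexHull ℝ s hA) (subset_convexHull ℝ s hB) hθ₀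
    (by linarith) (by ring)

/-- The lattice points of the hexagon lie on its three diagonal segments `w = j`, `w = j + 1`
and `j = w + 1`, each joining two of the six vertices. -/
theorem smul_add_smul_mem_convexHull_hexagon {s : Set E} {M D : E} {h : ℝ} (hh : 1 < h)
    (h0 : 0 ∈ s) (hD : D ∈ s) (hM : M ∈ s) (h1 : h • M + h • D ∈ s)
    (h2 : (h - 1) • M + h • D ∈ s) (h3 : h • M + (h - 1) • D ∈ s) {j w : ℤ}
    (hj₀ : 0 ≤ j) (hjh : j ≤ h) (hw₀ : 0 ≤ w) (hwh : w ≤ h) (hwj : w ≤ j + 1)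
    (hjw : j ≤ w + 1) : (j : ℝ) • M + (w : ℝ) • D ∈ convexHull ℝ s := by
  have hh₀ : h ≠ 0 := by positivity
  have hh₁ : h - 1 ≠ 0 := by linarith
  have hj : (0 : ℝ) ≤ j := by exact_mod_cast hj₀
  have hw : (0 : ℝ) ≤ w := by exact_mod_cast hw₀
  rcases (by omega : w = j ∨ w = j + 1 ∨ j = w + 1) with e | e | e
  · subst w
    convert smul_add_one_sub_smul_mem_convexHull h1 h0 (θ := j / h) (by positivity)
      ((div_le_one (by positivity)).2 hjh) using 1
    match_scalars <;> field_simp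
  · subst w
    convert smul_add_one_sub_smul_mem_convexHull h2 hD (θ := j / (h - 1)) (by positivity)
      ((div_le_one (by linarith)).2 (by push_cast at hwh; linarith)) using 1
    match_scalars <;> field_simp
    ring
  · subst j
    convert smul_add_one_sub_smul_mem_convexHull h3 hM (θ := w / (h - 1)) (by positivity)
      ((div_le_one (by linarith)).2 (by push_cast at hjh; linarith)) using 1
    match_scalars <;> field_simp
    ring

end ConvexHull

theorem coord_comb_le_of_mem_convexHull {d : ℕ} {S : Set (Fin d → ℝ)} (i j k : Fin d)
    (A B C r : ℝ) (hS : ∀ v ∈ S, A * v i + B * v j + C * v k ≤ r) {x : Fin d → ℝ}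
    (hx : x ∈ convexHull ℝ S) : A * x i + B * x j + C * x k ≤ r := by
  have hf : IsLinearMap ℝ fun y : Fin d → ℝ ↦ A * y i + B * y j + C * y k :=
    ⟨fun y z ↦ by simp only [Pi.add_apply]; ring,
      fun c y ↦ by simp only [Pi.smul_apply, smul_eq_mul]; ring⟩
  exact convexHull_min hS (convex_halfSpace_le hf r) hx

theorem castPt_zero {d : ℕ} : castPt (0 : Fin d → ℤ) = 0 := by
  ext i; simp [castPt]

theorem castPt_add {d : ℕ} (a b : Fin d → ℤ) : castPt (a + b) = castPt a + castPt b := by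
  ext i; simp [castPt]

theorem castPt_zsmul {d : ℕ} (n : ℤ) (a : Fin d → ℤ) : castPt (n • a) = (n : ℝ) • castPt a := by
  ext i; simp [castPt]

-- The coordinates `x_2, …, x_{d-1}` of the paper; indices are 0-based here.
def IsMid {d : ℕ} (i : Fin d) : Prop := 0 < i.val ∧ i.val < d - 1

theorem funext_of_mid {d : ℕ} {x y : Fin d → ℤ} {i₀ l : Fin d} (h₀ : i₀.val = 0)
    (hl : l.val = d - 1) (e₀ : x i₀ = y i₀) (emid : ∀ i, IsMid i → x i = y i)
    (el : x l = y l) : x = y := by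
  funext i
  by_cases hi : IsMid i
  · exact emid i hi
  · unfold IsMid at hi
    rcases (by omega : i = i₀ ∨ i = l) with rfl | rfl
    exacts [e₀, el]

def facet0Verts (h d : ℕ) : Set (Fin d → ℤ) :=
  ({0, eD d, eMid d, (h : ℤ) • (eMid d + eD d), ((h : ℤ) - 1) • eMid d + (h : ℤ) • eD d,
    (h : ℤ) • eMid d + ((h : ℤ) - 1) • eD d} : Set (Fin d → ℤ))
  ∪ {x | ∃ i : Fin d, 0 < i.val ∧ i.val < d - 1 ∧ (x = eV d i.val ∨ x = eV d i.val + eD d)}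

def facet1Verts (d : ℕ) : Set (Fin d → ℤ) :=
  {eOne d + (4 : ℤ) • eD d, eOne d + (5 : ℤ) • eD d, eOne d + eMid d, eOne d + eMid d + eD d}

theorem PhdVerts_eq_union (h d : ℕ) : PhdVerts h d = facet0Verts h d ∪ facet1Verts d := by
  rw [PhdVerts, facet0Verts, facet1Verts, Set.union_right_comm]
  simp only [Set.insert_union, Set.singleton_union]

theorem mem_facet0Verts {h d : ℕ} {u : Fin d → ℤ} : u ∈ facet0Verts h d ↔
    u = 0 ∨ u = eD d ∨ u = eMid d ∨ u = (h : ℤ) • (eMid d + eD d) ∨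
    u = ((h : ℤ) - 1) • eMid d + (h : ℤ) • eD d ∨ u = (h : ℤ) • eMid d + ((h : ℤ) - 1) • eD d ∨
    ∃ m : Fin d, IsMid m ∧ (u = eV d m.val ∨ u = eV d m.val + eD d) := by
  simp only [facet0Verts, Set.mem_union, Set.mem_insert_iff, Set.mem_singleton_iff,
    Set.mem_ofPred_eq, IsMid, and_assoc, or_assoc]

theorem mem_facet1Verts {d : ℕ} {u : Fin d → ℤ} : u ∈ facet1Verts d ↔
    u = eOne d + (4 : ℤ) • eD d ∨ u = eOne d + (5 : ℤ) • eD d ∨ u = eOne d + eMid d ∨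
    u = eOne d + eMid d + eD d := by
  simp only [facet1Verts, Set.mem_insert_iff, Set.mem_singleton_iff]

-- `P_0` and `P_1`, as the hulls of the vertices of `P_{h,d}` with `x_1 = 0`, resp. `x_1 = 1`.
def Phd₀ (h d : ℕ) : Set (Fin d → ℝ) := convexHull ℝ (castPt '' facet0Verts h d)

def Phd₁ (d : ℕ) : Set (Fin d → ℝ) := convexHull ℝ (castPt '' facet1Verts d)

namespace Phd₀

variable {h d : ℕ} {p : Fin d → ℝ} {i j k l : Fin d}

theorem coord_comb_le (hp : p ∈ Phd₀ h d) (i j k : Fin d) (A B C r : ℝ)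
    (hv : ∀ u ∈ facet0Verts h d, A * u i + B * u j + C * u k ≤ r) :
    A * p i + B * p j + C * p k ≤ r :=
  coord_comb_le_of_mem_convexHull i j k A B C r (by rintro _ ⟨u, hu, rfl⟩; exact hv u hu) hp

theorem mid_mem_Icc (hh : 1 ≤ h) (hp : p ∈ Phd₀ h d) (hi : IsMid i) :
    p i ∈ Set.Icc 0 (h : ℝ) := by
  have : (1 : ℝ) ≤ h := by exact_mod_cast hh
  have h1 := coord_comb_le hp i i i (-1) 0 0 0 ?_
  have h2 := coord_comb_le hp i i i 1 0 0 h ?_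
  · constructor <;> linarith
  all_goals
    intro u hu
    unfold IsMid at hi
    rcases mem_facet0Verts.1 hu with
      rfl | rfl | rfl | rfl | rfl | rfl | ⟨m, ⟨hm₁, hm₂⟩, rfl | rfl⟩ <;>
    simp only [eMid, eD, eV, Pi.add_apply, Pi.smul_apply, Pi.zero_apply, smul_eq_mul] <;>
    (try split_ifs) <;> push_cast <;> first | omega | nlinarith

theorem last_mem_Icc (hh : 1 ≤ h) (hp : p ∈ Phd₀ h d) (hl : l.val = d - 1) :
    p l ∈ Set.Icc 0 (h : ℝ) := by
  have : (1 : ℝ) ≤ h := by exact_mod_cast hh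
  have h1 := coord_comb_le hp l l l (-1) 0 0 0 ?_
  have h2 := coord_comb_le hp l l l 1 0 0 h ?_
  · constructor <;> linarith
  all_goals
    intro u hu
    rcases mem_facet0Verts.1 hu with
      rfl | rfl | rfl | rfl | rfl | rfl | ⟨m, ⟨hm₁, hm₂⟩, rfl | rfl⟩ <;>
    simp only [eMid, eD, eV, Pi.add_apply, Pi.smul_apply, Pi.zero_apply, smul_eq_mul] <;>
    (try split_ifs) <;> push_cast <;> first | omega | nlinarith

theorem abs_last_sub_mid_le (hp : p ∈ Phd₀ h d) (hi : IsMid i) (hl : l.val = d - 1) :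
    |p l - p i| ≤ 1 := by
  have h1 := coord_comb_le hp l i i 1 (-1) 0 1 ?_
  have h2 := coord_comb_le hp i l l 1 (-1) 0 1 ?_
  · rw [abs_sub_le_iff]; constructor <;> linarith
  all_goals
    intro u hu
    unfold IsMid at hi
    rcases mem_facet0Verts.1 hu with
      rfl | rfl | rfl | rfl | rfl | rfl | ⟨m, ⟨hm₁, hm₂⟩, rfl | rfl⟩ <;>
    simp only [eMid, eD, eV, Pi.add_apply, Pi.smul_apply, Pi.zero_apply, smul_eq_mul] <;>
    (try split_ifs) <;> push_cast <;> first | omega | nlinarith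

theorem mul_mid_le (hh : 1 ≤ h) (hp : p ∈ Phd₀ h d) (hi : IsMid i) (hj : IsMid j)
    (hij : i ≠ j) :
    h * p j ≤ (h - 1) * p i + h := by
  have : (1 : ℝ) ≤ h := by exact_mod_cast hh
  have h1 := coord_comb_le hp j i i h (-(h - 1)) 0 h ?_
  · linarith
  all_goals
    intro u hu
    unfold IsMid at hi hj
    rcases mem_facet0Verts.1 hu with
      rfl | rfl | rfl | rfl | rfl | rfl | ⟨m, ⟨hm₁, hm₂⟩, rfl | rfl⟩ <;>
    simp only [eMid, eD, eV, Pi.add_apply, Pi.smul_apply, Pi.zero_apply, smul_eq_mul] <;>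
    (try split_ifs) <;> push_cast <;> first | omega | nlinarith

theorem mul_add_mid_le (hh : 1 ≤ h) (hp : p ∈ Phd₀ h d) (hi : IsMid i) (hj : IsMid j)
    (hk : IsMid k) (hij : i ≠ j) (hik : i ≠ k) (hjk : j ≠ k) :
    h * (p i + p j) ≤ h + (2 * h - 1) * p k := by
  have : (1 : ℝ) ≤ h := by exact_mod_cast hh
  have h1 := coord_comb_le hp i j k h h (-(2 * h - 1)) h ?_
  · linarith
  all_goals
    intro u hu
    unfold IsMid at hi hj hk
    rcases mem_facet0Verts.1 hu with
      rfl | rfl | rfl | rfl | rfl | rfl | ⟨m, ⟨hm₁, hm₂⟩, rfl | rfl⟩ <;>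
    simp only [eMid, eD, eV, Pi.add_apply, Pi.smul_apply, Pi.zero_apply, smul_eq_mul] <;>
    (try split_ifs) <;> push_cast <;> first | omega | nlinarith

end Phd₀

namespace Phd₁

variable {d : ℕ} {q : Fin d → ℝ} {i j l : Fin d}

theorem coord_comb_le (hq : q ∈ Phd₁ d) (i j k : Fin d) (A B C r : ℝ)
    (hv : ∀ u ∈ facet1Verts d, A * u i + B * u j + C * u k ≤ r) :
    A * q i + B * q j + C * q k ≤ r :=
  coord_comb_le_of_mem_convexHull i j k A B C r (by rintro _ ⟨u, hu, rfl⟩; exact hv u hu) hq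

theorem mid_eq (hq : q ∈ Phd₁ d) (hi : IsMid i) (hj : IsMid j) : q i = q j := by
  have h1 := coord_comb_le hq i j j 1 (-1) 0 0 ?_
  have h2 := coord_comb_le hq j i i 1 (-1) 0 0 ?_
  · linarith
  all_goals
    intro u hu
    unfold IsMid at hi hj
    rcases mem_facet1Verts.1 hu with rfl | rfl | rfl | rfl <;>
    simp only [eOne, eMid, eD, eV, Pi.add_apply, Pi.smul_apply, smul_eq_mul] <;>
    split_ifs <;> push_cast <;> first | omega | linarith

theorem mid_mem_Icc (hq : q ∈ Phd₁ d) (hi : IsMid i) : q i ∈ Set.Icc 0 1 := by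
  have h1 := coord_comb_le hq i i i (-1) 0 0 0 ?_
  have h2 := coord_comb_le hq i i i 1 0 0 1 ?_
  · constructor <;> linarith
  all_goals
    intro u hu
    unfold IsMid at hi
    rcases mem_facet1Verts.1 hu with rfl | rfl | rfl | rfl <;>
    simp only [eOne, eMid, eD, eV, Pi.add_apply, Pi.smul_apply, smul_eq_mul] <;>
    split_ifs <;> push_cast <;> first | omega | linarith

theorem last_mem_Icc (hq : q ∈ Phd₁ d) (hi : IsMid i) (hl : l.val = d - 1) :
    q l ∈ Set.Icc (4 - 4 * q i) (5 - 4 * q i) := by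
  have h1 := coord_comb_le hq i l l (-4) (-1) 0 (-4) ?_
  have h2 := coord_comb_le hq i l l 4 1 0 5 ?_
  · constructor <;> linarith
  all_goals
    intro u hu
    unfold IsMid at hi
    rcases mem_facet1Verts.1 hu with rfl | rfl | rfl | rfl <;>
    simp only [eOne, eMid, eD, eV, Pi.add_apply, Pi.smul_apply, smul_eq_mul] <;>
    split_ifs <;> push_cast <;> first | omega | linarith

end Phd₁

theorem castPt_mem_Phd {h d : ℕ} {u : Fin d → ℤ} (hu : u ∈ PhdVerts h d) :
    castPt u ∈ Phd h d :=
  subset_convexHull ℝ _ (Set.mem_image_of_mem _ hu)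

theorem castPt_smul_eMid_add_smul_eD_mem_Phd {h d : ℕ} (hh : 2 ≤ h) {j w : ℤ}
    (hj₀ : 0 ≤ j) (hjh : j ≤ h) (hw₀ : 0 ≤ w) (hwh : w ≤ h) (hwj : w ≤ j + 1)
    (hjw : j ≤ w + 1) : castPt (j • eMid d + w • eD d) ∈ Phd h d := by
  have vert : ∀ u ∈ PhdVerts h d, castPt u ∈ castPt '' PhdVerts h d :=
    fun u hu ↦ ⟨u, hu, rfl⟩
  have h₀ := vert 0 (by simp [PhdVerts])
  have h₁ := vert (eD d) (by simp [PhdVerts])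
  have h₂ := vert (eMid d) (by simp [PhdVerts])
  have h₃ := vert ((h : ℤ) • (eMid d + eD d)) (by simp [PhdVerts])
  have h₄ := vert (((h : ℤ) - 1) • eMid d + (h : ℤ) • eD d) (by simp [PhdVerts])
  have h₅ := vert ((h : ℤ) • eMid d + ((h : ℤ) - 1) • eD d) (by simp [PhdVerts])
  simp only [castPt_zero, castPt_add, castPt_zsmul, smul_add, Int.cast_natCast, Int.cast_sub,
    Int.cast_one] at h₀ h₃ h₄ h₅ ⊢
  exact smul_add_smul_mem_convexHull_hexagon (by exact_mod_cast hh) h₀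
    h₁ h₂ h₃ h₄ h₅ hj₀ (by exact_mod_cast hjh) hw₀ (by exact_mod_cast hwh) hwj hjw

theorem eq_eOne_add_of_mid_eq {d : ℕ} {a : Fin d → ℤ} {c z : ℤ} {i₀ i₁ l : Fin d}
    (h₀ : i₀.val = 0) (h₁ : IsMid i₁) (hl : l.val = d - 1) (ha₀ : a i₀ = 1)
    (hmid : ∀ i, IsMid i → a i = c) (hal : a l = z) :
    a = eOne d + c • eMid d + z • eD d := by
  unfold IsMid at h₁
  refine funext_of_mid h₀ hl ?_ (fun i hi ↦ ?_) ?_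
  all_goals simp only [eOne, eMid, eD, eV, Pi.add_apply, Pi.smul_apply, smul_eq_mul]
  · split_ifs <;> omega
  · unfold IsMid at hi; rw [hmid i hi]; split_ifs <;> omega
  · split_ifs <;> omega

theorem eq_eOne_add_of_mid_step {d : ℕ} {a : Fin d → ℤ} {c z : ℤ} {i₀ k l : Fin d}
    (h₀ : i₀.val = 0) (hk : IsMid k) (hl : l.val = d - 1) (ha₀ : a i₀ = 1)
    (hk' : a k = c + 1) (hmid : ∀ i, IsMid i → i ≠ k → a i = c) (hal : a l = z) :
    a = eOne d + c • eMid d + eV d k + z • eD d := by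
  unfold IsMid at hk
  refine funext_of_mid h₀ hl ?_ (fun i hi ↦ ?_) ?_
  all_goals simp only [eOne, eMid, eD, eV, Pi.add_apply, Pi.smul_apply, smul_eq_mul]
  · split_ifs <;> omega
  · by_cases hik : i = k
    · subst hik; split_ifs <;> omega
    · have := hmid i hi hik
      unfold IsMid at hi
      have : i.val ≠ k.val := fun h ↦ hik (Fin.ext h)
      split_ifs <;> omega
  · split_ifs <;> omega

theorem eOne_add_smul_eMid_add_smul_eD_mem_PhdVerts {h d : ℕ} {t s : ℤ} (ht : t = 0 ∨ t = 1)
    (hs : s = 0 ∨ s = 1) : eOne d + t • eMid d + (4 - 4 * t + s) • eD d ∈ PhdVerts h d := by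
  rcases ht with rfl | rfl <;> rcases hs with rfl | rfl <;> norm_num [PhdVerts]

theorem eV_add_smul_eD_mem_PhdVerts {h d : ℕ} {k : Fin d} (hk : IsMid k) {B : ℤ}
    (hB : B = 0 ∨ B = 1) : eV d k + B • eD d ∈ PhdVerts h d := by
  refine Or.inr ⟨k, hk.1, hk.2, ?_⟩
  rcases hB with rfl | rfl <;> simp

def IsFacetSum (h : ℕ) {d : ℕ} (i₀ : Fin d) (a : Fin d → ℤ) : Prop :=
  ∃ a₀ a₁ : Fin d → ℤ, castPt a₀ ∈ Phd h d ∩ {x | x i₀ = 0} ∧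
    castPt a₁ ∈ Phd h d ∩ {x | x i₀ = 1} ∧ a = a₀ + a₁

theorem isFacetSum_add {h d : ℕ} {i₀ : Fin d} {a₀ a₁ : Fin d → ℤ} (h₀ : castPt a₀ ∈ Phd h d)
    (h₁ : castPt a₁ ∈ Phd h d) (e₀ : a₀ i₀ = 0) (e₁ : a₁ i₀ = 1) : IsFacetSum h i₀ (a₀ + a₁) :=
  ⟨a₀, a₁, ⟨h₀, by simp [castPt, e₀]⟩, ⟨h₁, by simp [castPt, e₁]⟩, rfl⟩

theorem exists_add_of_mem_two_smul_Phd {h d : ℕ} (hd : 2 ≤ d) {i₀ : Fin d} (h₀ : i₀.val = 0)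
    {x : Fin d → ℝ} (hx : x ∈ (2 : ℝ) • Phd h d) (hx₀ : x i₀ = 1) :
    ∃ p ∈ Phd₀ h d, ∃ q ∈ Phd₁ d, x = p + q := by
  rw [Phd, PhdVerts_eq_union, Set.image_union] at hx
  have h0 : (castPt '' facet0Verts h d).Nonempty := .image _ ⟨0, by simp [facet0Verts]⟩
  have h1 : (castPt '' facet1Verts d).Nonempty := .image _ ⟨_, Or.inl rfl⟩
  have e0 : ∀ v ∈ castPt '' facet0Verts h d, (LinearMap.proj i₀ : (Fin d → ℝ) →ₗ[ℝ] ℝ) v = 0 := by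
    rintro _ ⟨u, hu, rfl⟩
    rcases mem_facet0Verts.1 hu with
      rfl | rfl | rfl | rfl | rfl | rfl | ⟨m, ⟨hm₁, hm₂⟩, rfl | rfl⟩ <;>
    simp only [LinearMap.proj_apply, castPt, eMid, eD, eV, Pi.add_apply, Pi.smul_apply,
      Pi.zero_apply, smul_eq_mul] <;>
    (try split_ifs) <;> first | omega | simp
  have e1 : ∀ v ∈ castPt '' facet1Verts d, (LinearMap.proj i₀ : (Fin d → ℝ) →ₗ[ℝ] ℝ) v = 1 := by
    rintro _ ⟨u, hu, rfl⟩
    rcases mem_facet1Verts.1 hu with rfl | rfl | rfl | rfl <;>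
    simp only [LinearMap.proj_apply, castPt, eOne, eMid, eD, eV, Pi.add_apply, Pi.smul_apply,
      smul_eq_mul] <;>
    (try split_ifs) <;> first | omega | simp
  exact exists_add_of_mem_two_smul_convexHull_union _ h0 h1 e0 e1 hx hx₀

section LatticePoints

variable {h d : ℕ} {a : Fin d → ℤ} {p q : Fin d → ℝ}

theorem mid_le_add_one (hh : 1 ≤ h) (hp : p ∈ Phd₀ h d) (hq : q ∈ Phd₁ d)
    (hpq : ∀ i, (a i : ℝ) = p i + q i) {i j : Fin d} (hi : IsMid i) (hj : IsMid j) :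
    a j ≤ a i + 1 := by
  obtain rfl | hij := eq_or_ne i j
  · omega
  have hh' : (1 : ℝ) ≤ h := by exact_mod_cast hh
  have hji := Phd₀.mul_mid_le hh hp hi hj hij
  have hpi := (Phd₀.mid_mem_Icc hh hp hi).1
  have : p j ≤ p i + 1 := by nlinarith
  have : (a j : ℝ) ≤ a i + 1 := by rw [hpq, hpq, Phd₁.mid_eq hq hj hi]; linarith
  exact_mod_cast this

theorem mid_const_or_step {i₁ : Fin d} (hi₁ : IsMid i₁)
    (hle : ∀ i j, IsMid i → IsMid j → a j ≤ a i + 1) :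
    (∀ i, IsMid i → a i = a i₁) ∨ ∃ k k', IsMid k ∧ IsMid k' ∧ a k' = a k + 1 := by
  by_cases hc : ∀ i, IsMid i → a i = a i₁
  · exact .inl hc
  obtain ⟨i, hi, hne⟩ := not_forall₂.1 hc
  have := hle i i₁ hi hi₁
  have := hle i₁ i hi₁ hi
  rcases (by omega : a i = a i₁ + 1 ∨ a i₁ = a i + 1) with e | e
  exacts [.inr ⟨i₁, i, hi₁, hi, e⟩, .inr ⟨i, i₁, hi, hi₁, e⟩]

theorem mid_last_bounds (hh : 1 ≤ h) (hp : p ∈ Phd₀ h d) (hq : q ∈ Phd₁ d)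
    (hpq : ∀ i, (a i : ℝ) = p i + q i) {i l : Fin d} (hi : IsMid i) (hl : l.val = d - 1) :
    a i - 2 ≤ a l ∧ a l ≤ a i + 6 ∧ 4 ≤ a l + 4 * a i ∧ a l + 4 * a i ≤ 5 * h + 5 := by
  obtain ⟨hpi₀, hpih⟩ := Phd₀.mid_mem_Icc hh hp hi
  obtain ⟨hpl₀, hplh⟩ := Phd₀.last_mem_Icc hh hp hl
  obtain ⟨hpli₁, hpli₂⟩ := abs_le.1 (Phd₀.abs_last_sub_mid_le hp hi hl)
  obtain ⟨hqi₀, hqi₁⟩ := Phd₁.mid_mem_Icc hq hi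
  obtain ⟨hql₁, hql₂⟩ := Phd₁.last_mem_Icc hq hi hl
  have : (a i : ℝ) - 2 ≤ a l ∧ (a l : ℝ) ≤ a i + 6 ∧ 4 ≤ (a l : ℝ) + 4 * a i ∧
      (a l : ℝ) + 4 * a i ≤ 5 * h + 5 := by
    rw [hpq i, hpq l]; refine ⟨?_, ?_, ?_, ?_⟩ <;> linarith
  exact_mod_cast this

-- `(j, w)` is a lattice point of the hexagon in `P_0`, and `(t, s)` selects the vertex
-- `e_1 + t (e_2 + ⋯ + e_{d-1}) + (4 - 4t + s) e_d` of `P_1`.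
theorem exists_split_of_bounds {c z : ℤ} (h₁ : c - 2 ≤ z) (h₂ : z ≤ c + 6) (h₃ : 4 ≤ z + 4 * c)
    (h₄ : z + 4 * c ≤ 5 * h + 5) (hne : z ≠ c + 2) :
    ∃ j w t s : ℤ, (0 ≤ j ∧ j ≤ h ∧ 0 ≤ w ∧ w ≤ h ∧ w ≤ j + 1 ∧ j ≤ w + 1) ∧
      (t = 0 ∨ t = 1) ∧ (s = 0 ∨ s = 1) ∧ c = j + t ∧ z = w + (4 - 4 * t + s) := by
  rcases lt_or_gt_of_ne hne with hz | hz
  · by_cases hs : z < c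
    · exact ⟨c - 1, z, 1, 0, by omega⟩
    · exact ⟨c - 1, z - 1, 1, 1, by omega⟩
  · by_cases hs : z ≤ c + 4
    · exact ⟨c, z - 4, 0, 0, by omega⟩
    · exact ⟨c, z - 5, 0, 1, by omega⟩

theorem isFacetSum_or_eq_ujp_of_mid_const (hh : 2 ≤ h) (hp : p ∈ Phd₀ h d) (hq : q ∈ Phd₁ d)
    (hpq : ∀ i, (a i : ℝ) = p i + q i) {i₀ i₁ l : Fin d} (h₀ : i₀.val = 0) (h₁ : IsMid i₁)
    (hl : l.val = d - 1) (ha₀ : a i₀ = 1) (hmid : ∀ i, IsMid i → a i = a i₁) :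
    IsFacetSum h i₀ a ∨ ∃ j : ℤ, 1 ≤ j ∧ j ≤ h ∧ a = ujp d j := by
  obtain ⟨hb₁, hb₂, hb₃, hb₄⟩ := mid_last_bounds (by omega) hp hq hpq h₁ hl
  have ha := eq_eOne_add_of_mid_eq h₀ h₁ hl ha₀ hmid rfl
  generalize a i₁ = c at hb₁ hb₂ hb₃ hb₄ ha
  generalize a l = z at hb₁ hb₂ hb₃ hb₄ ha
  subst ha
  by_cases hz : z = c + 2
  · exact .inr ⟨c, by omega, by omega, by rw [hz, ujp]⟩
  obtain ⟨j, w, t, s, ⟨hj₀, hjh, hw₀, hwh, hwj, hjw⟩, ht, hs, rfl, rfl⟩ :=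
    exists_split_of_bounds hb₁ hb₂ hb₃ hb₄ hz
  unfold IsMid at h₁
  refine .inl ?_
  convert isFacetSum_add (castPt_smul_eMid_add_smul_eD_mem_Phd hh hj₀ hjh hw₀ hwh hwj hjw)
    (castPt_mem_Phd (eOne_add_smul_eMid_add_smul_eD_mem_PhdVerts ht hs)) ?_ ?_ using 1
  · module
  all_goals simp only [eOne, eMid, eD, eV, Pi.add_apply, Pi.smul_apply, smul_eq_mul]
  all_goals split_ifs <;> omega

theorem mid_step_constraints (hh : 1 ≤ h) (hp : p ∈ Phd₀ h d) (hq : q ∈ Phd₁ d)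
    (hpq : ∀ i, (a i : ℝ) = p i + q i) {k k' l : Fin d} (hk : IsMid k) (hk' : IsMid k')
    (hl : l.val = d - 1) (hstep : a k' = a k + 1) :
    (a k = 0 ∨ a k = 1) ∧ (∀ m, IsMid m → m ≠ k' → a m = a k) ∧
      4 - 4 * a k ≤ a l ∧ a l ≤ 6 - 4 * a k := by
  have hh' : (1 : ℝ) ≤ h := by exact_mod_cast hh
  have hkk' : k ≠ k' := by rintro rfl; omega
  have hpk' : p k' = p k + 1 := by
    have : (a k' : ℝ) = a k + 1 := by exact_mod_cast hstep
    rw [hpq, hpq, Phd₁.mid_eq hq hk' hk] at this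
    linarith
  obtain ⟨hpk₀, -⟩ := Phd₀.mid_mem_Icc hh hp hk
  -- `h p_{k'} ≤ (h - 1) p_k + h` with `p_{k'} = p_k + 1` reads `p_k ≤ 0`.
  have hpk : p k = 0 := by
    have := Phd₀.mul_mid_le hh hp hk hk' hkk'
    nlinarith
  have hak : (a k : ℝ) = q k := by rw [hpq, hpk, zero_add]
  obtain ⟨hqk₀, hqk₁⟩ := Phd₁.mid_mem_Icc hq hk
  refine ⟨?_, fun m hm hmk' ↦ ?_, ?_⟩
  · have : (0 : ℝ) ≤ a k ∧ (a k : ℝ) ≤ 1 := hak ▸ ⟨hqk₀, hqk₁⟩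
    have : 0 ≤ a k ∧ a k ≤ 1 := by exact_mod_cast this
    omega
  · obtain rfl | hmk := eq_or_ne m k
    · rfl
    have := Phd₀.mul_add_mid_le hh hp hk' hm hk hmk'.symm hkk'.symm hmk
    obtain ⟨hpm₀, -⟩ := Phd₀.mid_mem_Icc hh hp hm
    have hpm : p m = 0 := by nlinarith
    have : (a m : ℝ) = a k := by rw [hpq m, hpm, zero_add, Phd₁.mid_eq hq hm hk, hak]
    exact_mod_cast this
  · obtain ⟨hpl₀, -⟩ := Phd₀.last_mem_Icc hh hp hl
    obtain ⟨-, hplk⟩ := abs_le.1 (Phd₀.abs_last_sub_mid_le hp hk hl)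
    obtain ⟨hql₁, hql₂⟩ := Phd₁.last_mem_Icc hq hk hl
    have : 4 - 4 * (a k : ℝ) ≤ a l ∧ (a l : ℝ) ≤ 6 - 4 * a k := by
      rw [hpq l, hak]; constructor <;> linarith
    exact_mod_cast this

theorem isFacetSum_of_mid_step (hh : 1 ≤ h) (hp : p ∈ Phd₀ h d) (hq : q ∈ Phd₁ d)
    (hpq : ∀ i, (a i : ℝ) = p i + q i) {i₀ k k' l : Fin d} (h₀ : i₀.val = 0) (hk : IsMid k)
    (hk' : IsMid k') (hl : l.val = d - 1) (ha₀ : a i₀ = 1) (hstep : a k' = a k + 1) :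
    IsFacetSum h i₀ a := by
  obtain ⟨hc, hmid, hz₁, hz₂⟩ := mid_step_constraints hh hp hq hpq hk hk' hl hstep
  have ha := eq_eOne_add_of_mid_step h₀ hk' hl ha₀ hstep hmid rfl
  generalize a k = c at hc hz₁ hz₂ ha
  generalize a l = z at hz₁ hz₂ ha
  subst ha
  obtain ⟨B, s, hB, hs, rfl⟩ : ∃ B s : ℤ, (B = 0 ∨ B = 1) ∧ (s = 0 ∨ s = 1) ∧
      z = B + (4 - 4 * c + s) := by
    by_cases hz : z ≤ 5 - 4 * c
    · exact ⟨0, z - (4 - 4 * c), by omega⟩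
    · exact ⟨1, 1, by omega⟩
  unfold IsMid at hk'
  convert isFacetSum_add (castPt_mem_Phd (eV_add_smul_eD_mem_PhdVerts hk' hB))
    (castPt_mem_Phd (eOne_add_smul_eMid_add_smul_eD_mem_PhdVerts hc hs)) ?_ ?_ using 1
  · module
  all_goals simp only [eOne, eMid, eD, eV, Pi.add_apply, Pi.smul_apply, smul_eq_mul]
  all_goals split_ifs <;> omega

end LatticePoints

theorem stmt_15 (h d : ℕ) (hh : 3 ≤ h) (hd : 3 ≤ d) :
    ∀ a : Fin d → ℤ,
      castPt a ∈ ((2 : ℝ) • Phd h d) ∩ {x : Fin d → ℝ | x ⟨0, by omega⟩ = 1} →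
      (∃ a₀ a₁ : Fin d → ℤ,
        castPt a₀ ∈ Phd h d ∩ {x : Fin d → ℝ | x ⟨0, by omega⟩ = 0} ∧
        castPt a₁ ∈ Phd h d ∩ {x : Fin d → ℝ | x ⟨0, by omega⟩ = 1} ∧
        a = a₀ + a₁) ∨
      (∃ j : ℤ, 1 ≤ j ∧ j ≤ (h : ℤ) ∧ a = ujp d j) := by
  rintro a ⟨ha, ha₀⟩
  let i₀ : Fin d := ⟨0, by omega⟩
  let i₁ : Fin d := ⟨1, by omega⟩
  let l : Fin d := ⟨d - 1, by omega⟩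
  have hi₁ : IsMid i₁ := ⟨one_pos, by simp [i₁]; omega⟩
  obtain ⟨p, hp, q, hq, hpq⟩ := exists_add_of_mem_two_smul_Phd (by omega) rfl ha ha₀
  have hpq' (i : Fin d) : (a i : ℝ) = p i + q i := congrFun hpq i
  have ha₀' : a i₀ = 1 := by
    have : (a i₀ : ℝ) = 1 := ha₀
    exact_mod_cast this
  rcases mid_const_or_step hi₁ fun i j hi hj ↦ mid_le_add_one (by omega) hp hq hpq' hi hj with
    hconst | ⟨k, k', hk, hk', hstep⟩
  · exact isFacetSum_or_eq_ujp_of_mid_const (by omega) hp hq hpq' rfl hi₁ (l := l) rfl ha₀' hconst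
  · exact .inl (isFacetSum_of_mid_step (by omega) hp hq hpq' rfl hk hk' (l := l) rfl ha₀' hstep)
end
end

section
/- Let P ⊂ ℝ^d be an integral convex polytope of dimension d with ℤA_P = ℤ^{d+1}, where A_P = {(α,1) : α ∈ P ∩ ℤ^d}. If P is k-normal for some positive integer k (i.e., for all n ≥ k, every α ∈ nP ∩ ℤ^d is a sum of n lattice points of P), then the set of holes (ℝ_{≥0}A_P ∩ ℤ^{d+1}) \ ℤ_{≥0}A_P is finite, i.e., P is very ample. -/
open Finset Pointwise

noncomputable section

theorem stmt_17 (d : ℕ) (V : Finset (Fin d → ℤ)) (P : Set (Fin d → ℝ))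
    (hP : P = convexHull ℝ (castPt '' (V : Set (Fin d → ℤ))))
    (hdim : affineSpan ℝ P = ⊤)
    (hZA : AddSubgroup.closure (APts P) = ⊤)
    (k : ℕ) (hk : 0 < k)
    (hknorm : ∀ n : ℕ, k ≤ n → ∀ a : Fin d → ℤ, castPt a ∈ (n : ℝ) • P →
      ∃ f : Fin n → (Fin d → ℤ), (∀ i, castPt (f i) ∈ P) ∧ a = ∑ i, f i) :
    {b : Fin (d+1) → ℤ | castPt b ∈ coneOf (castPt '' APts P) ∧
      b ∉ AddSubmonoid.closure (APts P)}.Finite := by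
  classical
  -- a bound on P
  obtain ⟨M, hMP⟩ : ∃ M : ℝ, ∀ p ∈ P, ‖p‖ ≤ M := by
    obtain ⟨M, hM⟩ := ((V.finite_toSet.image castPt).isBounded).subset_closedBall 0
    refine ⟨M, fun p hp => ?_⟩
    have hsub : P ⊆ Metric.closedBall 0 M := by
      rw [hP]
      exact convexHull_min hM (convex_closedBall _ _)
    simpa [mem_closedBall_zero_iff] using hsub hp
  have hPconv : Convex ℝ P := hP ▸ convex_convexHull ℝ _
  set C : ℝ := (k : ℝ) * max M 1 with hCdef
  apply Set.Finite.subset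
    (Set.finite_Icc (fun _ : Fin (d+1) => -⌈C⌉) (fun _ : Fin (d+1) => ⌈C⌉))
  rintro b ⟨⟨m, c, v, hc, hv, hsum⟩, hb2⟩
  choose w hw hvw using fun i => hv i
  set p : Fin m → (Fin d → ℝ) := fun i => castPt (fun j => w i j.castSucc) with hpdef
  have hpP : ∀ i, p i ∈ P := fun i => (hw i).2
  -- componentwise sums
  have hcomp : ∀ j : Fin (d+1), (b j : ℝ) = ∑ i, c i * castPt (w i) j := by
    intro j
    have := congrFun hsum j
    simp only [castPt] at this ⊢
    rw [this]
    simp only [Finset.sum_apply, Pi.smul_apply, smul_eq_mul]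
    refine Finset.sum_congr rfl fun i _ => ?_
    rw [← hvw i]
    rfl
  have hlast : (b (Fin.last d) : ℝ) = ∑ i, c i := by
    rw [hcomp (Fin.last d)]
    refine Finset.sum_congr rfl fun i _ => ?_
    have : castPt (w i) (Fin.last d) = 1 := by
      simp [castPt, (hw i).1]
    rw [this, mul_one]
  have hlastnn : (0:ℝ) ≤ (b (Fin.last d) : ℝ) := by
    rw [hlast]; exact Finset.sum_nonneg fun i _ => hc i
  -- b last < k
  have hbk : b (Fin.last d) < (k : ℤ) := by
    by_contra h
    push_neg at h
    set n : ℕ := (b (Fin.last d)).toNat with hndef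
    have hbn : (b (Fin.last d) : ℤ) = (n : ℤ) :=
      (Int.toNat_of_nonneg (by exact_mod_cast hlastnn)).symm
    have hkn : k ≤ n := by omega
    have hn0 : (0:ℝ) < (n:ℝ) := by
      have : 0 < n := lt_of_lt_of_le hk hkn
      exact_mod_cast this
    have hsc : ∑ i, c i = (n : ℝ) := by
      rw [← hlast, hbn]; push_cast; ring
    set a : Fin d → ℤ := fun j => b j.castSucc with hadef
    have haP : castPt a ∈ (n : ℝ) • P := by
      rw [Set.mem_smul_set_iff_inv_smul_mem₀ (ne_of_gt hn0)]
      have heq : (n:ℝ)⁻¹ • castPt a = ∑ i, ((n:ℝ)⁻¹ * c i) • p i := by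
        funext j
        simp only [Pi.smul_apply, Finset.sum_apply, smul_eq_mul, castPt]
        rw [hcomp j.castSucc, Finset.mul_sum]
        refine Finset.sum_congr rfl fun i _ => ?_
        simp [hpdef, castPt]; ring
      rw [heq]
      refine Convex.sum_mem hPconv (fun i _ => mul_nonneg (by positivity) (hc i)) ?_
        (fun i _ => hpP i)
      rw [← Finset.mul_sum, hsc, inv_mul_cancel₀ (ne_of_gt hn0)]
    obtain ⟨f, hf, hfa⟩ := hknorm n hkn a haP
    apply hb2
    have hbsum : b = ∑ i : Fin n, (Fin.snoc (f i) 1 : Fin (d+1) → ℤ) := by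
      funext j
      rw [Finset.sum_apply]
      cases j using Fin.lastCases with
      | last =>
        simp only [Fin.snoc_last, Finset.sum_const, Finset.card_univ,
          Fintype.card_fin, nsmul_eq_mul, mul_one]
        omega
      | cast j =>
        simp only [Fin.snoc_castSucc]
        have := congrFun hfa j
        simpa [hadef] using this
    rw [hbsum]
    refine AddSubmonoid.sum_mem _ fun i _ => AddSubmonoid.subset_closure ?_
    refine ⟨by simp, ?_⟩
    have : (fun j : Fin d => (Fin.snoc (f i) 1 : Fin (d+1) → ℤ) j.castSucc) = f i := by
      funext j; simp
    rw [this]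
    exact hf i
  -- norm bound
  have hbound : ∀ j : Fin (d+1), |(b j : ℝ)| ≤ C := by
    intro j
    rw [hcomp j]
    calc |∑ i, c i * castPt (w i) j| ≤ ∑ i, |c i * castPt (w i) j| :=
          Finset.abs_sum_le_sum_abs _ _
      _ ≤ ∑ i, c i * max M 1 := by
          refine Finset.sum_le_sum fun i _ => ?_
          rw [abs_mul, abs_of_nonneg (hc i)]
          refine mul_le_mul_of_nonneg_left ?_ (hc i)
          cases j using Fin.lastCases with
          | last =>
            have : castPt (w i) (Fin.last d) = 1 := by simp [castPt, (hw i).1]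
            rw [this]; simp
          | cast j =>
            have h1 : |castPt (w i) j.castSucc| ≤ ‖p i‖ := by
              have := norm_le_pi_norm (p i) j
              simpa [hpdef, castPt, Real.norm_eq_abs] using this
            exact h1.trans ((hMP _ (hpP i)).trans (le_max_left _ _))
      _ = (∑ i, c i) * max M 1 := by rw [Finset.sum_mul]
      _ ≤ (k:ℝ) * max M 1 := by
          refine mul_le_mul_of_nonneg_right ?_ (by positivity)
          rw [← hlast]
          exact_mod_cast (le_of_lt hbk)
  constructor <;> intro j
  · have h1 := (abs_le.mp (hbound j)).1
    have h2 : -(⌈C⌉:ℝ) ≤ (b j : ℝ) := le_trans (neg_le_neg (Int.le_ceil C)) h1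
    exact_mod_cast h2
  · have h1 := (abs_le.mp (hbound j)).2
    have h2 : (b j : ℝ) ≤ (⌈C⌉:ℝ) := h1.trans (Int.le_ceil C)
    exact_mod_cast h2
end
end
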